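/- arXiv:2401.16831 — 8 statements merged into one kernel-verified Lean document; each statement's English description precedes it below -/
import Mathlib

section
/- Let G be a connected simple graph, let x, y, z be three pairwise adjacent vertices of G, and let S = {x,y,z}. If u and v are both quasi-eccentric to S, then |d(u,S) − d(v,S)| ≤ 1. -/
/-- Let `G` be a connected simple graph, `x, y, z` three pairwise adjacent
vertices and `S = {x,y,z}`.  If `u` and `v` are both quasi-eccentric to `S`, then
`|d(u,S) − d(v,S)| ≤ 1`. -/
theorem quasiEccentric_distSet_diff_le_one {V : Type*} (G : SimpleGraph V) (hG : G.Connected)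
    (x y z : V) (hxy : G.Adj x y) (hyz : G.Adj y z) (hxz : G.Adj x z)
    (S : Set V) (hS : S = {x, y, z})
    (u v : V)
    (hu : ∀ w : V, ∃ s ∈ S, G.dist w s ≤ G.dist u s)
    (hv : ∀ w : V, ∃ s ∈ S, G.dist w s ≤ G.dist v s) :
    |((sInf (G.dist u '' S) : ℕ) : ℤ) - ((sInf (G.dist v '' S) : ℕ) : ℤ)| ≤ 1 := by
  -- any two elements of S are equal or adjacent
  have key : ∀ w : V, ∀ s ∈ S, ∀ s' ∈ S, G.dist w s ≤ G.dist w s' + 1 := by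
    intro w s hs s' hs'
    have hadj : s = s' ∨ G.Adj s' s := by
      subst hS
      simp only [Set.mem_insert_iff, Set.mem_singleton_iff] at hs hs'
      rcases hs with rfl | rfl | rfl <;> rcases hs' with rfl | rfl | rfl <;>
        simp_all [G.adj_comm]
    rcases hadj with rfl | hadj
    · omega
    · have h1 : G.dist s' s = 1 := (SimpleGraph.dist_eq_one_iff_adj).2 hadj
      have := hG.dist_triangle (u := w) (v := s') (w := s)
      omega
  have hne : ∀ w : V, (G.dist w '' S).Nonempty := by
    intro w; exact ⟨G.dist w x, ⟨x, by simp [hS]⟩⟩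
  have hmain : ∀ a b : V, (∀ w : V, ∃ s ∈ S, G.dist w s ≤ G.dist a s) →
      sInf (G.dist b '' S) ≤ sInf (G.dist a '' S) + 1 := by
    intro a b ha
    obtain ⟨s0, hs0S, hs0⟩ := (Nat.sInf_mem (hne a) : sInf (G.dist a '' S) ∈ G.dist a '' S)
    obtain ⟨s, hsS, hs⟩ := ha b
    have h1 : sInf (G.dist b '' S) ≤ G.dist b s := Nat.sInf_le ⟨s, hsS, rfl⟩
    have h2 : G.dist a s ≤ G.dist a s0 + 1 := key a s hsS s0 hs0S
    omega
  have h1 := hmain u v hu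
  have h2 := hmain v u hv
  rw [abs_le]
  constructor <;> push_cast <;> omega
end

section
/- Let G be a connected simple graph, let x, y, z be three pairwise adjacent vertices of G, let S = {x,y,z}, and let k be a natural number. Then (i) it is not the case that there exist vertices u and v, both quasi-eccentric to S, with d(u,x) = d(u,y) = k and d(u,z) = k+1, and d(v,x) = d(v,y) = k+1 and d(v,z) = k+2; and (ii) it is not the case that there exist vertices u and v, both quasi-eccentric to S, with d(u,x) = k and d(u,y) = d(u,z) = k+1, and d(v,x) = k+1 and d(v,y) = d(v,z) = k+2. -/
/-- The set of vertices of `G` quasi-eccentric to `S`. -/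
def SimpleGraph.qcc {V : Type*} (G : SimpleGraph V) (S : Set V) : Set V :=
  {u : V | ∀ v : V, ∃ s ∈ S, G.dist v s ≤ G.dist u s}

/-- Let `G` be a connected simple graph, `x, y, z` three pairwise adjacent
vertices, `S = {x,y,z}` and `k : ℕ`.  Then (i) there are no vertices `u, v`, both
quasi-eccentric to `S`, with `d(u,x) = d(u,y) = k`, `d(u,z) = k+1`, `d(v,x) = d(v,y) = k+1`
and `d(v,z) = k+2`; and (ii) there are no vertices `u, v`, both quasi-eccentric to `S`, with
`d(u,x) = k`, `d(u,y) = d(u,z) = k+1`, `d(v,x) = k+1` and `d(v,y) = d(v,z) = k+2`. -/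
theorem no_same_pattern_at_consecutive_levels {V : Type*} (G : SimpleGraph V)
    (hG : G.Connected)
    (x y z : V) (hxy : G.Adj x y) (hyz : G.Adj y z) (hxz : G.Adj x z)
    (S : Set V) (hS : S = {x, y, z}) (k : ℕ) :
    (¬ ∃ u ∈ G.qcc S, ∃ v ∈ G.qcc S,
        G.dist u x = k ∧ G.dist u y = k ∧ G.dist u z = k + 1 ∧
        G.dist v x = k + 1 ∧ G.dist v y = k + 1 ∧ G.dist v z = k + 2) ∧
    (¬ ∃ u ∈ G.qcc S, ∃ v ∈ G.qcc S,
        G.dist u x = k ∧ G.dist u y = k + 1 ∧ G.dist u z = k + 1 ∧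
        G.dist v x = k + 1 ∧ G.dist v y = k + 2 ∧ G.dist v z = k + 2) := by
  constructor <;>
  · rintro ⟨u, hu, v, hv, h1, h2, h3, h4, h5, h6⟩
    obtain ⟨s, hs, hle⟩ := hu v
    rw [hS] at hs
    rcases hs with rfl | rfl | rfl <;> omega
end

section
/- Let G be a connected simple graph, let x, y, z be three pairwise adjacent vertices of G, let S = {x,y,z}, and let k be a natural number. If there exists a vertex v quasi-eccentric to S with d(v,x) = k+1 and d(v,y) = d(v,z) = k+2, then there is no vertex u quasi-eccentric to S with d(u,x) = k. -/
/-- Let `G` be a connected simple graph, `x, y, z` three pairwise adjacent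
vertices, `S = {x,y,z}` and `k : ℕ`.  If there is a vertex `v` quasi-eccentric to `S` with
`d(v,x) = k+1` and `d(v,y) = d(v,z) = k+2`, then there is no vertex `u` quasi-eccentric to
`S` with `d(u,x) = k`. -/
theorem no_close_vertex_of_far_quasiEccentric {V : Type*} (G : SimpleGraph V)
    (hG : G.Connected)
    (x y z : V) (hxy : G.Adj x y) (hyz : G.Adj y z) (hxz : G.Adj x z)
    (S : Set V) (hS : S = {x, y, z}) (k : ℕ)
    (hv : ∃ v ∈ G.qcc S, G.dist v x = k + 1 ∧ G.dist v y = k + 2 ∧ G.dist v z = k + 2) :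
    ¬ ∃ u ∈ G.qcc S, G.dist u x = k := by
  rintro ⟨u, hu, hux⟩
  obtain ⟨v, -, hvx, hvy, hvz⟩ := hv
  obtain ⟨s, hs, hle⟩ := hu v
  have h1 : G.dist x y = 1 := SimpleGraph.dist_eq_one_iff_adj.mpr hxy
  have h2 : G.dist x z = 1 := SimpleGraph.dist_eq_one_iff_adj.mpr hxz
  have huy : G.dist u y ≤ k + 1 := by
    have := hG.dist_triangle (u := u) (v := x) (w := y); omega
  have huz : G.dist u z ≤ k + 1 := by
    have := hG.dist_triangle (u := u) (v := x) (w := z); omega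
  rw [hS] at hs
  rcases hs with rfl | rfl | rfl <;> omega
end

section
/- Let G be a finite connected simple graph, let x, y, z be three pairwise adjacent vertices of G, let S = {x,y,z}, and let k be a natural number with k = min_{w ∈ qcc(S)} d(w,S). Then it is not the case that all three of the following hold: there exists a vertex of qcc(S) at distance k+1 from x and k+2 from both y and z; there exists a vertex of qcc(S) at distance k+1 from y and k+2 from both x and z; and there exists a vertex of qcc(S) at distance k+1 from z and k+2 from both x and y. -/
set_option maxHeartbeats 1000000


/-- Let `G` be a finite connected simple graph, `x, y, z` three pairwise
adjacent vertices, `S = {x,y,z}` and `k = min_{w ∈ qcc(S)} d(w,S)`.  Then it is not the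
case that all three of the following hold: some vertex of `qcc(S)` is at distance `k+1`
from `x` and `k+2` from `y` and `z`; some vertex of `qcc(S)` is at distance `k+1` from `y`
and `k+2` from `x` and `z`; and some vertex of `qcc(S)` is at distance `k+1` from `z` and
`k+2` from `x` and `y`. -/
theorem not_all_three_far_quasiEccentric {V : Type*} [Fintype V] (G : SimpleGraph V)
    (hG : G.Connected)
    (x y z : V) (hxy : G.Adj x y) (hyz : G.Adj y z) (hxz : G.Adj x z)
    (S : Set V) (hS : S = {x, y, z}) (k : ℕ)
    (hk : k = sInf ((fun w => sInf (G.dist w '' S)) '' G.qcc S)) :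
    ¬ ((∃ u ∈ G.qcc S, G.dist u x = k + 1 ∧ G.dist u y = k + 2 ∧ G.dist u z = k + 2) ∧
       (∃ u ∈ G.qcc S, G.dist u y = k + 1 ∧ G.dist u x = k + 2 ∧ G.dist u z = k + 2) ∧
       (∃ u ∈ G.qcc S, G.dist u z = k + 1 ∧ G.dist u x = k + 2 ∧ G.dist u y = k + 2)) := by
  rintro ⟨⟨u₁, hu₁, h1x, h1y, h1z⟩, ⟨u₂, hu₂, h2y, h2x, h2z⟩, ⟨u₃, hu₃, h3z, h3x, h3y⟩⟩
  -- pick a minimizer `w` of `d(·,S)` over `qcc S`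
  have hne : ((fun w => sInf (G.dist w '' S)) '' G.qcc S).Nonempty := ⟨_, u₁, hu₁, rfl⟩
  obtain ⟨w, hw, hwk⟩ := hk ▸ Nat.sInf_mem hne
  simp only at hwk
  have hSne : (G.dist w '' S).Nonempty := ⟨_, x, by rw [hS]; simp, rfl⟩
  have hmem : k ∈ G.dist w '' S := hwk ▸ Nat.sInf_mem hSne
  obtain ⟨s₀, hs₀S, hs₀⟩ := hmem
  have memS : ∀ {s : V}, s ∈ S → s = x ∨ s = y ∨ s = z := by
    intro s hs; rw [hS] at hs; simpa using hs
  -- distances among x, y, z are 1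
  have dxy : G.dist x y = 1 := SimpleGraph.dist_eq_one_iff_adj.2 hxy
  have dyz : G.dist y z = 1 := SimpleGraph.dist_eq_one_iff_adj.2 hyz
  have dxz : G.dist x z = 1 := SimpleGraph.dist_eq_one_iff_adj.2 hxz
  -- triangle bounds between the three distances from w
  have txy : G.dist w x ≤ G.dist w y + 1 := by
    have h := hG.dist_triangle (u := w) (v := y) (w := x)
    rwa [SimpleGraph.dist_eq_one_iff_adj.2 hxy.symm] at h
  have tyx : G.dist w y ≤ G.dist w x + 1 := by
    have h := hG.dist_triangle (u := w) (v := x) (w := y)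
    rwa [dxy] at h
  have tyz : G.dist w y ≤ G.dist w z + 1 := by
    have h := hG.dist_triangle (u := w) (v := z) (w := y)
    rwa [SimpleGraph.dist_eq_one_iff_adj.2 hyz.symm] at h
  have tzy : G.dist w z ≤ G.dist w y + 1 := by
    have h := hG.dist_triangle (u := w) (v := y) (w := z)
    rwa [dyz] at h
  have txz : G.dist w x ≤ G.dist w z + 1 := by
    have h := hG.dist_triangle (u := w) (v := z) (w := x)
    rwa [SimpleGraph.dist_eq_one_iff_adj.2 hxz.symm] at h
  have tzx : G.dist w z ≤ G.dist w x + 1 := by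
    have h := hG.dist_triangle (u := w) (v := x) (w := z)
    rwa [dxz] at h
  -- quasi-eccentricity of w applied to u₁, u₂, u₃
  have P1 : k + 1 ≤ G.dist w x ∨ k + 2 ≤ G.dist w y ∨ k + 2 ≤ G.dist w z := by
    obtain ⟨s, hs, hle⟩ := hw u₁
    rcases memS hs with rfl | rfl | rfl
    · exact Or.inl (h1x ▸ hle)
    · exact Or.inr (Or.inl (h1y ▸ hle))
    · exact Or.inr (Or.inr (h1z ▸ hle))
  have P2 : k + 2 ≤ G.dist w x ∨ k + 1 ≤ G.dist w y ∨ k + 2 ≤ G.dist w z := by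
    obtain ⟨s, hs, hle⟩ := hw u₂
    rcases memS hs with rfl | rfl | rfl
    · exact Or.inl (h2x ▸ hle)
    · exact Or.inr (Or.inl (h2y ▸ hle))
    · exact Or.inr (Or.inr (h2z ▸ hle))
  have P3 : k + 2 ≤ G.dist w x ∨ k + 2 ≤ G.dist w y ∨ k + 1 ≤ G.dist w z := by
    obtain ⟨s, hs, hle⟩ := hw u₃
    rcases memS hs with rfl | rfl | rfl
    · exact Or.inl (h3x ▸ hle)
    · exact Or.inr (Or.inl (h3y ▸ hle))
    · exact Or.inr (Or.inr (h3z ▸ hle))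
  -- reduce to pure arithmetic
  have hmin : G.dist w x = k ∨ G.dist w y = k ∨ G.dist w z = k := by
    rcases memS hs₀S with rfl | rfl | rfl
    · exact Or.inl hs₀
    · exact Or.inr (Or.inl hs₀)
    · exact Or.inr (Or.inr hs₀)
  clear hk hwk hne hSne hw hu₁ hu₂ hu₃ hs₀ hs₀S memS hS
  clear h1x h1y h1z h2x h2y h2z h3x h3y h3z dxy dyz dxz hxy hyz hxz hG
  generalize G.dist w x = A at *
  generalize G.dist w y = B at *
  generalize G.dist w z = C at *
  rcases hmin with h | h | h
  · rcases P1 with p | p | p <;> omega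
  · rcases P2 with p | p | p <;> omega
  · rcases P3 with p | p | p <;> omega
end

section
/- Let V be a type, let G₁, …, Gₙ (n ≥ 1) be subgraphs of a simple graph on V, each connected as a graph, such that for all distinct indices m and l the intersection of the vertex sets V(G_m) ∩ V(G_l) equals a fixed nonempty set S (independent of m and l). Let G = G₁ ∪ ⋯ ∪ Gₙ (union of vertex sets and edge sets) and H = G₁ ∩ ⋯ ∩ Gₙ (intersection of vertex sets and edge sets, so V(H) = S). Assume H is connected and H is an isometric subgraph of each G_m (for all u, v ∈ S, d_H(u,v) = d_{G_m}(u,v)). Then each G_m is an isometric subgraph of G: for all m and all vertices u, v of G_m, d_{G_m}(u,v) = d_G(u,v). -/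
open SimpleGraph

/-- Let `G₁, …, Gₙ` (`n ≥ 1`) be subgraphs of a simple graph on `V`,
each connected, such that for all distinct `m, l` the intersection `V(G_m) ∩ V(G_l)` is a
fixed nonempty set `S`.  Let `G = G₁ ∪ ⋯ ∪ Gₙ` and `H = G₁ ∩ ⋯ ∩ Gₙ`.  If `H` is connected
and is an isometric subgraph of each `G_m`, then each `G_m` is an isometric subgraph of
`G`. -/
theorem subgraphs_isometric_in_union {V : Type*} (G : SimpleGraph V) (n : ℕ) (hn : 1 ≤ n)
    (Gs : Fin n → G.Subgraph)
    (hconn : ∀ m, (Gs m).coe.Connected)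
    (S : Set V) (hS : S.Nonempty)
    (hint : ∀ m l, m ≠ l → (Gs m).verts ∩ (Gs l).verts = S)
    (hHconn : (⨅ m, Gs m).coe.Connected)
    (hiso : ∀ m, ∀ (u v : V) (huH : u ∈ (⨅ m, Gs m).verts) (hvH : v ∈ (⨅ m, Gs m).verts)
        (hum : u ∈ (Gs m).verts) (hvm : v ∈ (Gs m).verts),
        (⨅ m, Gs m).coe.dist ⟨u, huH⟩ ⟨v, hvH⟩ = (Gs m).coe.dist ⟨u, hum⟩ ⟨v, hvm⟩) :
    ∀ m, ∀ (u v : V) (hum : u ∈ (Gs m).verts) (hvm : v ∈ (Gs m).verts)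
        (huG : u ∈ (⨆ m, Gs m).verts) (hvG : v ∈ (⨆ m, Gs m).verts),
        (Gs m).coe.dist ⟨u, hum⟩ ⟨v, hvm⟩ = (⨆ m, Gs m).coe.dist ⟨u, huG⟩ ⟨v, hvG⟩ := by
  classical
  have hle : ∀ k, Gs k ≤ ⨆ k, Gs k := fun k => le_iSup Gs k
  have hHle : ∀ k, (⨅ k, Gs k) ≤ Gs k := fun k => iInf_le Gs k
  -- distance decreases when passing to a larger subgraph
  have distmono : ∀ (A B : G.Subgraph), A ≤ B → ∀ (a b : V) (ha : a ∈ A.verts)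
      (hb : b ∈ A.verts) (ha' : a ∈ B.verts) (hb' : b ∈ B.verts),
      A.coe.Reachable ⟨a, ha⟩ ⟨b, hb⟩ →
      B.coe.dist ⟨a, ha'⟩ ⟨b, hb'⟩ ≤ A.coe.dist ⟨a, ha⟩ ⟨b, hb⟩ := by
    intro A B hAB a b ha hb ha' hb' hr
    obtain ⟨p, hp⟩ := hr.exists_walk_length_eq_dist
    have h1 := SimpleGraph.dist_le (p.map (SimpleGraph.Subgraph.inclusion hAB))
    rw [SimpleGraph.Walk.length_map, hp] at h1
    exact h1
  -- S is contained in every vertex set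
  have hSsub : ∀ (i j k : Fin n), i ≠ j →
      (Gs i).verts ∩ (Gs j).verts ⊆ (Gs k).verts := by
    intro i j k hij x hx
    rcases eq_or_ne k i with rfl | hki
    · exact hx.1
    · have hxS : x ∈ S := (hint i j hij) ▸ hx
      have hx2 : x ∈ (Gs k).verts ∩ (Gs i).verts := by
        rw [hint k i hki]; exact hxS
      exact hx2.1
  have hmemH : ∀ (i j : Fin n), i ≠ j → ∀ x, x ∈ (Gs i).verts → x ∈ (Gs j).verts →
      x ∈ (⨅ k, Gs k).verts := by
    intro i j hij x hxi hxj
    rw [SimpleGraph.Subgraph.verts_iInf]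
    exact Set.mem_iInter.2 fun k => hSsub i j k hij ⟨hxi, hxj⟩
  -- bridging: distances between vertices of `H` agree (up to ≤) across the `Gs`
  have bridge : ∀ (i m : Fin n) (a b : V) (haH : a ∈ (⨅ k, Gs k).verts)
      (hbH : b ∈ (⨅ k, Gs k).verts) (ham : a ∈ (Gs m).verts) (hbm : b ∈ (Gs m).verts)
      (hai : a ∈ (Gs i).verts) (hbi : b ∈ (Gs i).verts),
      (Gs m).coe.dist ⟨a, ham⟩ ⟨b, hbm⟩ ≤ (Gs i).coe.dist ⟨a, hai⟩ ⟨b, hbi⟩ := by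
    intro i m a b haH hbH ham hbm hai hbi
    have h1 := distmono _ _ (hHle m) a b haH hbH ham hbm (hHconn _ _)
    exact h1.trans (le_of_eq (hiso i a b haH hbH hai hbi))
  -- adjacency step
  have step : ∀ (k : Fin n) (a x v : (Gs k).verts), (Gs k).coe.Adj a x →
      (Gs k).coe.dist a v ≤ 1 + (Gs k).coe.dist x v := by
    intro k a x v h
    have h1 : (Gs k).coe.dist a x ≤ 1 := by
      simpa using SimpleGraph.dist_le (SimpleGraph.Walk.cons h SimpleGraph.Walk.nil)
    exact (hconn k).dist_triangle.trans (Nat.add_le_add_right h1 _)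
  -- main induction on walks in the union
  have key : ∀ (m : Fin n) (x y : (⨆ k, Gs k).verts) (W : (⨆ k, Gs k).coe.Walk x y),
      ∀ (j : Fin n) (huj : ↑x ∈ (Gs j).verts) (hvm : ↑y ∈ (Gs m).verts),
      ∃ (a : V) (haj : a ∈ (Gs j).verts) (ham : a ∈ (Gs m).verts),
        (Gs j).coe.dist ⟨↑x, huj⟩ ⟨a, haj⟩ + (Gs m).coe.dist ⟨a, ham⟩ ⟨↑y, hvm⟩
          ≤ W.length := by
    intro m x y W
    induction W with
    | nil =>
      intro j huj hvm
      exact ⟨_, huj, hvm, by simp⟩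
    | @cons x z y h W' ih =>
      intro j huj hvm
      obtain ⟨i, hi⟩ := (SimpleGraph.Subgraph.iSup_adj).1 h
      have hxi : ↑x ∈ (Gs i).verts := hi.fst_mem
      have hzi : ↑z ∈ (Gs i).verts := hi.snd_mem
      obtain ⟨a, hai, ham, hlen⟩ := ih i hzi hvm
      have hstep : (Gs i).coe.dist ⟨↑x, hxi⟩ ⟨a, hai⟩
          ≤ 1 + (Gs i).coe.dist ⟨↑z, hzi⟩ ⟨a, hai⟩ :=
        step i ⟨↑x, hxi⟩ ⟨↑z, hzi⟩ ⟨a, hai⟩ (by exact hi)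
      rcases eq_or_ne i j with rfl | hij
      · refine ⟨a, hai, ham, ?_⟩
        rw [SimpleGraph.Walk.length_cons]
        calc (Gs i).coe.dist ⟨↑x, huj⟩ ⟨a, hai⟩ + (Gs m).coe.dist ⟨a, ham⟩ ⟨↑y, hvm⟩
            ≤ (1 + (Gs i).coe.dist ⟨↑z, hzi⟩ ⟨a, hai⟩)
              + (Gs m).coe.dist ⟨a, ham⟩ ⟨↑y, hvm⟩ := Nat.add_le_add_right hstep _
          _ = 1 + ((Gs i).coe.dist ⟨↑z, hzi⟩ ⟨a, hai⟩
              + (Gs m).coe.dist ⟨a, ham⟩ ⟨↑y, hvm⟩) := by ring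
          _ ≤ 1 + W'.length := Nat.add_le_add_left hlen _
          _ = W'.length + 1 := by ring
      · have hxH : (↑x : V) ∈ (⨅ k, Gs k).verts := hmemH i j hij ↑x hxi huj
        have hxm : (↑x : V) ∈ (Gs m).verts := (hHle m).1 hxH
        refine ⟨↑x, huj, hxm, ?_⟩
        have t2 : (Gs m).coe.dist ⟨↑x, hxm⟩ ⟨a, ham⟩
            ≤ (Gs i).coe.dist ⟨↑x, hxi⟩ ⟨a, hai⟩ := by
          rcases eq_or_ne i m with rfl | him
          · exact le_refl _
          · have haH : a ∈ (⨅ k, Gs k).verts := hmemH i m him a hai ham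
            exact bridge i m ↑x a hxH haH hxm ham hxi hai
        have t1 : (Gs m).coe.dist ⟨↑x, hxm⟩ ⟨↑y, hvm⟩
            ≤ (Gs m).coe.dist ⟨↑x, hxm⟩ ⟨a, ham⟩
              + (Gs m).coe.dist ⟨a, ham⟩ ⟨↑y, hvm⟩ := (hconn m).dist_triangle
        rw [SimpleGraph.Walk.length_cons]
        have hz : (Gs j).coe.dist ⟨↑x, huj⟩ ⟨↑x, huj⟩ = 0 := SimpleGraph.dist_self
        rw [hz, Nat.zero_add]
        calc (Gs m).coe.dist ⟨↑x, hxm⟩ ⟨↑y, hvm⟩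
            ≤ (Gs m).coe.dist ⟨↑x, hxm⟩ ⟨a, ham⟩
              + (Gs m).coe.dist ⟨a, ham⟩ ⟨↑y, hvm⟩ := t1
          _ ≤ (Gs i).coe.dist ⟨↑x, hxi⟩ ⟨a, hai⟩
              + (Gs m).coe.dist ⟨a, ham⟩ ⟨↑y, hvm⟩ := Nat.add_le_add_right t2 _
          _ ≤ (1 + (Gs i).coe.dist ⟨↑z, hzi⟩ ⟨a, hai⟩)
              + (Gs m).coe.dist ⟨a, ham⟩ ⟨↑y, hvm⟩ := Nat.add_le_add_right hstep _
          _ = 1 + ((Gs i).coe.dist ⟨↑z, hzi⟩ ⟨a, hai⟩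
              + (Gs m).coe.dist ⟨a, ham⟩ ⟨↑y, hvm⟩) := by ring
          _ ≤ 1 + W'.length := Nat.add_le_add_left hlen _
          _ = W'.length + 1 := by ring
  intro m u v hum hvm huG hvG
  have hreachm : (Gs m).coe.Reachable ⟨u, hum⟩ ⟨v, hvm⟩ := (hconn m) _ _
  have le1 : (⨆ k, Gs k).coe.dist ⟨u, huG⟩ ⟨v, hvG⟩
      ≤ (Gs m).coe.dist ⟨u, hum⟩ ⟨v, hvm⟩ :=
    distmono _ _ (hle m) u v hum hvm huG hvG hreachm
  have hreachG : (⨆ k, Gs k).coe.Reachable ⟨u, huG⟩ ⟨v, hvG⟩ :=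
    hreachm.elim fun p => ⟨p.map (SimpleGraph.Subgraph.inclusion (hle m))⟩
  obtain ⟨p, hp⟩ := hreachG.exists_walk_length_eq_dist
  obtain ⟨a, haj, ham, hlen⟩ := key m ⟨u, huG⟩ ⟨v, hvG⟩ p m hum hvm
  have tri : (Gs m).coe.dist ⟨u, hum⟩ ⟨v, hvm⟩
      ≤ (Gs m).coe.dist ⟨u, hum⟩ ⟨a, haj⟩ + (Gs m).coe.dist ⟨a, ham⟩ ⟨v, hvm⟩ :=
    (hconn m).dist_triangle
  have tri2 : (Gs m).coe.dist ⟨u, hum⟩ ⟨v, hvm⟩ ≤ p.length := tri.trans hlen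
  exact le_antisymm (tri2.trans (le_of_eq hp)) le1
end

section
/- Let V be a finite type, let G₁, …, Gₙ (n ≥ 1) be subgraphs of a simple graph on V, each connected as a graph, such that for all distinct indices m and l the intersection of the vertex sets V(G_m) ∩ V(G_l) equals a fixed nonempty set S (independent of m and l). Let G = G₁ ∪ ⋯ ∪ Gₙ (union of vertex sets and edge sets) and H = G₁ ∩ ⋯ ∩ Gₙ (intersection of vertex sets and edge sets, so V(H) = S). Assume H is connected and H is an isometric subgraph of each G_m (for all u, v ∈ S, d_H(u,v) = d_{G_m}(u,v)). Then every vertex u ∈ S satisfies e_G(u) = max{ e_{G_m}(u) : m ∈ {1,…,n} }, where e_K(u) denotes the eccentricity of u in the graph K. -/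
open SimpleGraph


/-- Let `V` be finite and let `G₁, …, Gₙ` (`n ≥ 1`) be subgraphs of a
simple graph on `V`, each connected, such that for all distinct `m, l` the intersection
`V(G_m) ∩ V(G_l)` is a fixed nonempty set `S`.  Let `G = G₁ ∪ ⋯ ∪ Gₙ` and
`H = G₁ ∩ ⋯ ∩ Gₙ`.  If `H` is connected and is an isometric subgraph of each `G_m`, then
every vertex `u ∈ S` satisfies `e_G(u) = max { e_{G_m}(u) : 1 ≤ m ≤ n }`, where the
eccentricity `e_K(u)` is the maximum distance in `K` from `u` to a vertex of `K`. -/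
theorem eccentricity_in_union_eq_max {V : Type*} [Fintype V] (G : SimpleGraph V)
    (n : ℕ) (hn : 1 ≤ n) (Gs : Fin n → G.Subgraph)
    (hconn : ∀ m, (Gs m).coe.Connected)
    (S : Set V) (hS : S.Nonempty)
    (hint : ∀ m l, m ≠ l → (Gs m).verts ∩ (Gs l).verts = S)
    (hHconn : (⨅ m, Gs m).coe.Connected)
    (hiso : ∀ m, ∀ (u v : V) (huH : u ∈ (⨅ m, Gs m).verts) (hvH : v ∈ (⨅ m, Gs m).verts)
        (hum : u ∈ (Gs m).verts) (hvm : v ∈ (Gs m).verts),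
        (⨅ m, Gs m).coe.dist ⟨u, huH⟩ ⟨v, hvH⟩ = (Gs m).coe.dist ⟨u, hum⟩ ⟨v, hvm⟩) :
    ∀ (u : V), u ∈ S → ∀ (huG : u ∈ (⨆ m, Gs m).verts)
        (hum : ∀ m, u ∈ (Gs m).verts),
        sSup (Set.range fun w : (⨆ m, Gs m).verts => (⨆ m, Gs m).coe.dist ⟨u, huG⟩ w) =
          sSup (Set.range fun m : Fin n =>
            sSup (Set.range fun w : (Gs m).verts => (Gs m).coe.dist ⟨u, hum m⟩ w)) := by
  intro u huS huG hum
  -- distance in the union is at most distance in a part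
  have hdistle : ∀ (m : Fin n) (a b : V) (ham : a ∈ (Gs m).verts) (hbm : b ∈ (Gs m).verts)
      (ha' : a ∈ (⨆ m, Gs m).verts) (hb' : b ∈ (⨆ m, Gs m).verts),
      (⨆ m, Gs m).coe.dist ⟨a, ha'⟩ ⟨b, hb'⟩ ≤ (Gs m).coe.dist ⟨a, ham⟩ ⟨b, hbm⟩ := by
    intro m a b ham hbm ha' hb'
    obtain ⟨p, hp⟩ := (hconn m).exists_walk_length_eq_dist ⟨a, ham⟩ ⟨b, hbm⟩
    have := SimpleGraph.dist_le (p.map (Subgraph.inclusion (le_iSup Gs m)))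
    simp only [Walk.length_map, hp] at this
    exact this
  -- the key combinatorial lemma
  have keyC : ∀ (x y : (⨆ m, Gs m).verts) (p : (⨆ m, Gs m).coe.Walk x y) (l m : Fin n)
      (hxl : x.1 ∈ (Gs l).verts) (hym : y.1 ∈ (Gs m).verts),
      ∃ (s : V) (hsl : s ∈ (Gs l).verts) (hsm : s ∈ (Gs m).verts),
        (Gs l).coe.dist ⟨x.1, hxl⟩ ⟨s, hsl⟩ + (Gs m).coe.dist ⟨s, hsm⟩ ⟨y.1, hym⟩
          ≤ p.length := by
    intro x y p
    induction p with
    | nil =>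
      intro l m hxl hym
      refine ⟨_, hxl, hym, ?_⟩
      simp [SimpleGraph.dist_self]
    | @cons a c d hadj q ih =>
      intro l m hxl hym
      have hadj' : (⨆ m, Gs m).Adj a.1 c.1 := hadj
      obtain ⟨l₁, hadj₁⟩ := Subgraph.iSup_adj.mp hadj'
      have hal₁ : a.1 ∈ (Gs l₁).verts := hadj₁.fst_mem
      have hcl₁ : c.1 ∈ (Gs l₁).verts := hadj₁.snd_mem
      obtain ⟨s, hsl₁, hsm, hsum⟩ := ih l₁ m hcl₁ hym
      by_cases hll : l₁ = l
      · subst hll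
        refine ⟨s, hsl₁, hsm, ?_⟩
        have h1 : (Gs l₁).coe.dist ⟨a.1, hal₁⟩ ⟨c.1, hcl₁⟩ ≤ 1 := by
          have hc : (Gs l₁).coe.Adj ⟨a.1, hal₁⟩ ⟨c.1, hcl₁⟩ := hadj₁
          simpa using SimpleGraph.dist_le (Walk.cons hc Walk.nil)
        have h2 := (hconn l₁).dist_triangle (u := (⟨a.1, hal₁⟩ : (Gs l₁).verts))
          (v := ⟨c.1, hcl₁⟩) (w := ⟨s, hsl₁⟩)
        simp only [Walk.length_cons]
        omega
      · have hne : l ≠ l₁ := fun e => hll e.symm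
        have hxS : a.1 ∈ S := by
          rw [← hint l l₁ hne]; exact ⟨hxl, hal₁⟩
        have hSall : ∀ z ∈ S, ∀ m', z ∈ (Gs m').verts := by
          intro z hz m'
          obtain ⟨l'', hl''⟩ : ∃ l'', m' ≠ l'' := by
            rcases eq_or_ne m' l with rfl | h
            · exact ⟨l₁, hne⟩
            · exact ⟨l, h⟩
          rw [← hint m' l'' hl''] at hz
          exact hz.1
        have hSH : ∀ z ∈ S, z ∈ (⨅ m, Gs m).verts := by
          intro z hz
          rw [Subgraph.verts_iInf]
          exact Set.mem_iInter.mpr fun m' => hSall z hz m'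
        by_cases hlm : l₁ = m
        · subst hlm
          refine ⟨a.1, hxl, hal₁, ?_⟩
          have h1 : (Gs l₁).coe.dist ⟨a.1, hal₁⟩ ⟨c.1, hcl₁⟩ ≤ 1 := by
            have hc : (Gs l₁).coe.Adj ⟨a.1, hal₁⟩ ⟨c.1, hcl₁⟩ := hadj₁
            simpa using SimpleGraph.dist_le (Walk.cons hc Walk.nil)
          have h2 := (hconn l₁).dist_triangle (u := (⟨a.1, hal₁⟩ : (Gs l₁).verts))
            (v := ⟨c.1, hcl₁⟩) (w := ⟨s, hsl₁⟩)
          have h3 := (hconn l₁).dist_triangle (u := (⟨a.1, hal₁⟩ : (Gs l₁).verts))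
            (v := ⟨s, hsl₁⟩) (w := ⟨d.1, hym⟩)
          have h0 : (Gs l).coe.dist ⟨a.1, hxl⟩ ⟨a.1, hxl⟩ = 0 := SimpleGraph.dist_self
          simp only [Walk.length_cons]
          omega
        · have hsS : s ∈ S := by
            rw [← hint l₁ m hlm]; exact ⟨hsl₁, hsm⟩
          have hsl : s ∈ (Gs l).verts := hSall s hsS l
          refine ⟨s, hsl, hsm, ?_⟩
          have e1 : (Gs l).coe.dist ⟨a.1, hxl⟩ ⟨s, hsl⟩
              = (Gs l₁).coe.dist ⟨a.1, hal₁⟩ ⟨s, hsl₁⟩ := by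
            rw [← hiso l a.1 s (hSH _ hxS) (hSH _ hsS) hxl hsl,
              hiso l₁ a.1 s (hSH _ hxS) (hSH _ hsS) hal₁ hsl₁]
          have h1 : (Gs l₁).coe.dist ⟨a.1, hal₁⟩ ⟨c.1, hcl₁⟩ ≤ 1 := by
            have hc : (Gs l₁).coe.Adj ⟨a.1, hal₁⟩ ⟨c.1, hcl₁⟩ := hadj₁
            simpa using SimpleGraph.dist_le (Walk.cons hc Walk.nil)
          have h2 := (hconn l₁).dist_triangle (u := (⟨a.1, hal₁⟩ : (Gs l₁).verts))
            (v := ⟨c.1, hcl₁⟩) (w := ⟨s, hsl₁⟩)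
          simp only [Walk.length_cons]
          omega
  -- distances agree
  have hdeq : ∀ (m : Fin n) (w : V) (hwm : w ∈ (Gs m).verts) (hwG : w ∈ (⨆ m, Gs m).verts),
      (⨆ m, Gs m).coe.dist ⟨u, huG⟩ ⟨w, hwG⟩ = (Gs m).coe.dist ⟨u, hum m⟩ ⟨w, hwm⟩ := by
    intro m w hwm hwG
    refine le_antisymm (hdistle m u w (hum m) hwm huG hwG) ?_
    have hr : (⨆ m, Gs m).coe.Reachable ⟨u, huG⟩ ⟨w, hwG⟩ := by
      have hr0 : (Gs m).coe.Reachable ⟨u, hum m⟩ ⟨w, hwm⟩ := (hconn m) ⟨u, hum m⟩ ⟨w, hwm⟩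
      exact hr0.map (Subgraph.inclusion (le_iSup Gs m))
    obtain ⟨p, hp⟩ := hr.exists_walk_length_eq_dist
    obtain ⟨s, hsl, hsm, hsum⟩ := keyC ⟨u, huG⟩ ⟨w, hwG⟩ p m m (hum m) hwm
    have hsum' : (Gs m).coe.dist ⟨u, hum m⟩ ⟨s, hsl⟩
        + (Gs m).coe.dist ⟨s, hsl⟩ ⟨w, hwm⟩ ≤ p.length := hsum
    have h2 := (hconn m).dist_triangle (u := (⟨u, hum m⟩ : (Gs m).verts))
      (v := ⟨s, hsl⟩) (w := ⟨w, hwm⟩)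
    omega
  -- wrap up with sSup manipulations
  apply le_antisymm
  · refine csSup_le ⟨_, ⟨⟨u, huG⟩, rfl⟩⟩ ?_
    rintro d ⟨w, rfl⟩
    obtain ⟨m, hwm⟩ : ∃ m, w.1 ∈ (Gs m).verts := by
      have hw : (w : V) ∈ ⋃ i, (Gs i).verts := by
        rw [← Subgraph.verts_iSup]; exact w.2
      exact Set.mem_iUnion.mp hw
    show (⨆ m, Gs m).coe.dist ⟨u, huG⟩ w ≤ _
    have hthis : (⨆ m, Gs m).coe.dist ⟨u, huG⟩ w = (Gs m).coe.dist ⟨u, hum m⟩ ⟨w.1, hwm⟩ :=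
      hdeq m w.1 hwm w.2
    rw [hthis]
    calc (Gs m).coe.dist ⟨u, hum m⟩ ⟨w.1, hwm⟩
        ≤ sSup (Set.range fun w : (Gs m).verts => (Gs m).coe.dist ⟨u, hum m⟩ w) :=
          le_csSup (Set.Finite.bddAbove (Set.finite_range _)) ⟨⟨w.1, hwm⟩, rfl⟩
      _ ≤ _ := le_csSup (Set.Finite.bddAbove (Set.finite_range _)) ⟨m, rfl⟩
  · have : Nonempty (Fin n) := ⟨⟨0, hn⟩⟩
    refine csSup_le (Set.range_nonempty _) ?_
    rintro d ⟨m, rfl⟩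
    refine csSup_le ⟨_, ⟨⟨u, hum m⟩, rfl⟩⟩ ?_
    rintro e ⟨w, rfl⟩
    have hwG : w.1 ∈ (⨆ m, Gs m).verts := Subgraph.verts_mono (le_iSup Gs m) w.2
    show (Gs m).coe.dist ⟨u, hum m⟩ w ≤ _
    exact le_trans (Nat.le_of_eq (hdeq m w.1 w.2 hwG).symm)
      (le_csSup (Set.Finite.bddAbove (Set.finite_range _)) ⟨⟨w.1, hwG⟩, rfl⟩)
end

section
/- Let G be a finite connected simple graph on vertex set V with diameter d ≥ 1, and let k be a natural number. Suppose that for every set T of vertices, if there exist two vertices outside T lying in different connected components of the subgraph induced on V \ T, then |T| ≥ k. Then |V| ≥ 2 + (d − 1)·k. -/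
lemma walk_ivt {V : Type*} (G : SimpleGraph V) (hG : G.Connected) (u : V) :
    ∀ {a b : V} (p : G.Walk a b) (i : ℕ), G.dist u a ≤ i → i ≤ G.dist u b →
      ∃ x ∈ p.support, G.dist u x = i := by
  intro a b p
  induction p with
  | nil =>
    intro i h1 h2
    exact ⟨_, by simp, le_antisymm h1 h2⟩
  | @cons a c b h p ih =>
    intro i h1 h2
    by_cases hc : G.dist u c ≤ i
    · obtain ⟨x, hx, hx'⟩ := ih i hc h2
      exact ⟨x, by simp [hx], hx'⟩
    · push_neg at hc
      have htri : G.dist u c ≤ G.dist u a + 1 := by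
        have := hG.dist_triangle (u := u) (v := a) (w := c)
        rwa [SimpleGraph.dist_eq_one_iff_adj.mpr h] at this
      have : i = G.dist u a := le_antisymm (by omega) h1
      exact ⟨a, by simp, this.symm⟩

/-- Let `G` be a finite connected simple graph on vertex set `V` with
diameter `d ≥ 1`, and let `k : ℕ`.  Suppose that every vertex set `T` separating two
vertices outside `T` (i.e. some two vertices outside `T` lie in different components of
the subgraph induced on `V \ T`) satisfies `|T| ≥ k`.  Then `|V| ≥ 2 + (d − 1)·k`. -/
theorem card_ge_of_connectivity_diam {V : Type*} [Fintype V] (G : SimpleGraph V)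
    (hG : G.Connected) (hd : 1 ≤ G.diam) (k : ℕ)
    (hcut : ∀ T : Set V, ∀ (u v : V) (hu : u ∉ T) (hv : v ∉ T),
      ¬ (G.induce Tᶜ).Reachable ⟨u, hu⟩ ⟨v, hv⟩ → k ≤ T.ncard) :
    2 + (G.diam - 1) * k ≤ Fintype.card V := by
  classical
  have : Nonempty V := hG.nonempty
  obtain ⟨u, v, huv⟩ := G.exists_dist_eq_diam
  set d := G.diam with hdd
  -- the distance layers
  set T : ℕ → Finset V := fun i => Finset.univ.filter (fun w => G.dist u w = i) with hT
  have hdisj : (↑(Finset.Icc 0 d : Finset ℕ) : Set ℕ).PairwiseDisjoint T := by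
    intro i _ j _ hij
    simp only [Finset.disjoint_left, hT, Finset.mem_filter]
    rintro x ⟨-, h1⟩ ⟨-, h2⟩
    exact hij (h1.symm.trans h2)
  have hsum : ∑ i ∈ Finset.Icc 0 d, (T i).card ≤ Fintype.card V := by
    rw [← Finset.card_biUnion (fun i hi j hj hij => hdisj (by simpa using hi) (by simpa using hj) hij)]
    exact Finset.card_le_card (Finset.subset_univ _)
  have hmid : ∀ i ∈ Finset.Ioo 0 d, k ≤ (T i).card := by
    intro i hi
    simp only [Finset.mem_Ioo] at hi
    have hu0 : u ∉ (↑(T i) : Set V) := by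
      simp only [hT, Finset.coe_filter, Set.mem_setOf_eq, Finset.mem_univ, true_and,
        SimpleGraph.dist_self]
      omega
    have hv0 : v ∉ (↑(T i) : Set V) := by
      simp only [hT, Finset.coe_filter, Set.mem_setOf_eq, Finset.mem_univ, true_and, huv]
      omega
    have hk := hcut (↑(T i)) u v hu0 hv0 ?_
    · rwa [Set.ncard_coe_finset] at hk
    · rintro ⟨p⟩
      -- map the walk to G
      let f : (G.induce (↑(T i) : Set V)ᶜ) →g G :=
        (SimpleGraph.Embedding.induce (↑(T i) : Set V)ᶜ).toHom
      have hf : ∀ y, f y = y.1 := fun y => rfl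
      obtain ⟨x, hx, hxd⟩ := walk_ivt G hG u (p.map f) i
        (by rw [hf]; simp [SimpleGraph.dist_self])
        (by rw [hf]; rw [huv]; omega)
      rw [SimpleGraph.Walk.support_map, List.mem_map] at hx
      obtain ⟨⟨y, hy⟩, hy', rfl⟩ := hx
      simp only [Set.mem_compl_iff, Finset.mem_coe, hT, Finset.mem_filter, Finset.mem_univ,
        true_and] at hy
      exact hy hxd
  calc 2 + (d - 1) * k
      ≤ (T 0).card + (T d).card + ∑ i ∈ Finset.Ioo 0 d, (T i).card := by
        have h0 : 1 ≤ (T 0).card := Finset.card_pos.mpr ⟨u, by simp [hT]⟩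
        have hdcard : 1 ≤ (T d).card := Finset.card_pos.mpr ⟨v, by simp [hT, huv]⟩
        have hmidsum : (d - 1) * k ≤ ∑ i ∈ Finset.Ioo 0 d, (T i).card := by
          calc (d - 1) * k = ∑ _i ∈ Finset.Ioo 0 d, k := by
                simp [Nat.card_Ioo, mul_comm]
            _ ≤ _ := Finset.sum_le_sum hmid
        omega
    _ = ∑ i ∈ Finset.Icc 0 d, (T i).card := by
        have hins : Finset.Icc 0 d = insert 0 (insert d (Finset.Ioo 0 d)) := by
          ext j; simp only [Finset.mem_Icc, Finset.mem_insert, Finset.mem_Ioo]; omega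
        rw [hins, Finset.sum_insert (by simp only [Finset.mem_insert, Finset.mem_Ioo]; omega),
          Finset.sum_insert (by simp only [Finset.mem_Ioo]; omega)]
        omega
    _ ≤ Fintype.card V := hsum
end

section
/- Let G be a connected simple graph, let u, v, s be vertices of G, and let W be a set of vertices with v ∉ W and s ∉ W such that v and s lie in different connected components of the subgraph induced on V(G) \ W (so every v–s path contains a vertex of W). If d(u,w) < d(v,w) for every w ∈ W, then d(u,s) < d(v,s). -/
lemma reachable_induce_of_walk {V : Type*} (G : SimpleGraph V) (W : Set V) :
    ∀ {a b : V} (p : G.Walk a b) (h : ∀ x ∈ p.support, x ∉ W),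
      (G.induce Wᶜ).Reachable ⟨a, h a p.start_mem_support⟩ ⟨b, h b p.end_mem_support⟩ := by
  intro a b p
  induction p with
  | nil => intro h; rfl
  | cons hadj q ih =>
    intro h
    refine SimpleGraph.Reachable.trans (SimpleGraph.Adj.reachable ?_)
      (ih (fun x hx => h x (by simp [hx])))
    exact hadj

/-- Let `G` be a connected simple graph, `u, v, s` vertices and `W` a set
of vertices with `v ∉ W` and `s ∉ W`, such that `v` and `s` lie in different connected
components of the subgraph induced on `V(G) \ W`.  If `d(u,w) < d(v,w)` for every `w ∈ W`,
then `d(u,s) < d(v,s)`. -/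
theorem dist_lt_of_strictly_closer_to_separator {V : Type*} (G : SimpleGraph V)
    (hG : G.Connected) (u v s : V) (W : Set V) (hv : v ∉ W) (hs : s ∉ W)
    (hsep : ¬ (G.induce Wᶜ).Reachable ⟨v, hv⟩ ⟨s, hs⟩)
    (hclose : ∀ w ∈ W, G.dist u w < G.dist v w) :
    G.dist u s < G.dist v s := by
  classical
  obtain ⟨p, hp⟩ := (hG v s).exists_walk_length_eq_dist
  -- p contains a vertex of W
  obtain ⟨w, hwsup, hwW⟩ : ∃ w ∈ p.support, w ∈ W := by
    by_contra hc
    push_neg at hc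
    exact hsep (reachable_induce_of_walk G W p hc)
  have htake : G.dist v w ≤ (p.takeUntil w hwsup).length := SimpleGraph.dist_le _
  have hdrop : G.dist w s ≤ (p.dropUntil w hwsup).length := SimpleGraph.dist_le _
  have hsum : (p.takeUntil w hwsup).length + (p.dropUntil w hwsup).length = p.length := by
    rw [← SimpleGraph.Walk.length_append, p.take_spec hwsup]
  have h1 : G.dist v w + G.dist w s ≤ G.dist v s := by
    rw [← hp, ← hsum]; omega
  have h2 : G.dist u s ≤ G.dist u w + G.dist w s := hG.dist_triangle
  have h3 := hclose w hwW
  omega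
end
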